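/- Let R = k[x,y] over a field k and V ⊆ R_j a subspace of dimension d ≥ 1. If τ(V) = 1, i.e. dim_k(R_1·V) = d + 1, then there exists f ∈ R_{j-d+1} such that V = f · R_{d-1}, the space of all products of f with forms of degree d−1. -/

import Mathlib

/-!
Induction on `d = dim V`. Put `W = {w | x w ∈ V, y w ∈ V}`. Since `x` and `y` are coprime,
`xV ∩ yV = xy W`, so the dimension formula for `R₁V = xV + yV` gives `dim W = d - 1`. For
`W ≠ 0` one has `dim R₁W > dim W`: otherwise `yW ⊆ xW`, and then every element of `W` is
divisible by every power of `x`. As `R₁W ⊆ V`, this forces `R₁W = V` and `τ(W) = 1`, so by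
induction `W = f R_{d-2}` and `V = R₁ f R_{d-2} = f R_{d-1}`.
-/

open MvPolynomial Submodule
open scoped Pointwise

lemma span_setOf_exists_mul_eq_mul {R A : Type*} [CommSemiring R] [Semiring A] [Algebra R A]
    (M N : Submodule R A) : span R {p | ∃ a ∈ M, ∃ b ∈ N, p = a * b} = M * N := by
  rw [mul_eq_span_mul_set]
  congr 1
  ext p
  simp only [Set.mem_ofPred_eq, Set.mem_mul, SetLike.mem_coe, eq_comm]

instance {R A : Type*} [CommSemiring R] [Semiring A] [Algebra R A] {a : A}
    {V : Submodule R A} [Module.Finite R V] : Module.Finite R ↥(a • V) :=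
  Module.Finite.map V _

section General

variable {σ R : Type*} [CommSemiring R]

lemma isHomogeneous_of_X_mul {i : σ} {p : MvPolynomial σ R} {n : ℕ}
    (h : (X i * p).IsHomogeneous n) : p.IsHomogeneous (n - 1) := by
  intro d hd
  have := h (by rwa [coeff_X_mul] : coeff (Finsupp.single i 1 + d) (X i * p) ≠ 0)
  rw [map_add, Finsupp.weight_single, Pi.one_apply, smul_eq_mul, mul_one] at this
  omega

lemma homogeneousSubmodule_one_mul (m : ℕ) :
    homogeneousSubmodule σ R 1 * homogeneousSubmodule σ R m =
      homogeneousSubmodule σ R (m + 1) := by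
  rw [← homogeneousSubmodule_one_pow R m, ← homogeneousSubmodule_one_pow R (m + 1), pow_succ']

end General

section Divisibility

variable {σ R : Type*} [CommRing R] [IsDomain R] {i j : σ}

lemma exists_eq_X_mul_of_X_mul_eq_X_mul (hij : i ≠ j) {a b : MvPolynomial σ R}
    (h : X i * a = X j * b) : ∃ c, a = X j * c ∧ b = X i * c := by
  have hX : ¬ (X j : MvPolynomial σ R) ∣ X i := fun hd => hij (X_dvd_X.mp hd).symm
  obtain ⟨c, rfl⟩ := (X_prime.dvd_or_dvd ⟨b, h⟩).resolve_left hX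
  refine ⟨c, rfl, mul_left_cancel₀ (X_ne_zero j) ?_⟩
  rw [← h]
  ring

lemma eq_zero_of_forall_X_pow_dvd {p : MvPolynomial σ R} (h : ∀ n : ℕ, X i ^ n ∣ p) :
    p = 0 := by
  by_contra hp
  have := totalDegree_le_of_dvd_of_isDomain (h (p.totalDegree + 1)) hp
  rw [totalDegree_X_pow] at this
  omega

lemma eq_bot_of_X_smul_le (hij : i ≠ j) {W : Submodule R (MvPolynomial σ R)}
    (h : (X j : MvPolynomial σ R) • W ≤ (X i : MvPolynomial σ R) • W) : W = ⊥ := by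
  have hpow : ∀ n : ℕ, ∀ g ∈ W, ∃ g' ∈ W, X j ^ n * g = X i ^ n * g' := by
    intro n
    induction n with
    | zero => exact fun g hg => ⟨g, hg, by simp⟩
    | succ n ih =>
      intro g hg
      obtain ⟨g₁, hg₁, h₁⟩ :=
        (mem_smul_pointwise_iff_exists _ _ _).mp (h (smul_mem_pointwise_smul g (X j) W hg))
      obtain ⟨g₂, hg₂, h₂⟩ := ih g₁ hg₁
      refine ⟨g₂, hg₂, ?_⟩
      rw [smul_eq_mul, smul_eq_mul] at h₁
      calc X j ^ (n + 1) * g = X j ^ n * (X j * g) := by ring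
        _ = X i * (X j ^ n * g₁) := by rw [← h₁]; ring
        _ = X i ^ (n + 1) * g₂ := by rw [h₂]; ring
  have hX : ∀ n, ¬ (X i : MvPolynomial σ R) ∣ X j ^ n :=
    fun n hd => hij (X_dvd_X.mp (X_prime.dvd_of_dvd_pow hd))
  refine eq_bot_iff.mpr fun g hg => (mem_bot R).mpr ?_
  refine eq_zero_of_forall_X_pow_dvd (i := i) fun n => ?_
  obtain ⟨g', -, hg'⟩ := hpow n g hg
  exact X_prime.pow_dvd_of_dvd_mul_left n (hX n) ⟨g', hg'⟩

lemma finrank_pointwise_smul {f : MvPolynomial σ R} (hf : f ≠ 0)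
    (V : Submodule R (MvPolynomial σ R)) :
    Module.finrank R ↥(f • V) = Module.finrank R V :=
  (equivMapOfInjective _ (fun _ _ h => mul_left_cancel₀ hf h) V).finrank_eq.symm

end Divisibility

section TwoVariables

variable {R : Type*} [CommRing R]

local notation "𝕩" => (X 0 : MvPolynomial (Fin 2) R)
local notation "𝕪" => (X 1 : MvPolynomial (Fin 2) R)

lemma homogeneousSubmodule_one_mul_eq_sup (V : Submodule R (MvPolynomial (Fin 2) R)) :
    homogeneousSubmodule (Fin 2) R 1 * V = 𝕩 • V ⊔ 𝕪 • V := by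
  have hrange : Set.range (X : Fin 2 → MvPolynomial (Fin 2) R) = {𝕩, 𝕪} := by
    ext; simp [Fin.exists_fin_two, eq_comm]
  rw [homogeneousSubmodule_one_eq_span_X, hrange, span_insert, Submodule.sup_mul,
    span_singleton_mul, span_singleton_mul]

noncomputable def linearColon (V : Submodule R (MvPolynomial (Fin 2) R)) :
    Submodule R (MvPolynomial (Fin 2) R) :=
  V.comap (LinearMap.mulLeft R 𝕩) ⊓ V.comap (LinearMap.mulLeft R 𝕪)

variable {V : Submodule R (MvPolynomial (Fin 2) R)}

lemma mem_linearColon {w : MvPolynomial (Fin 2) R} :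
    w ∈ linearColon V ↔ 𝕩 * w ∈ V ∧ 𝕪 * w ∈ V :=
  Iff.rfl

lemma homogeneousSubmodule_one_mul_linearColon_le :
    homogeneousSubmodule (Fin 2) R 1 * linearColon V ≤ V := by
  rw [homogeneousSubmodule_one_mul_eq_sup, sup_le_iff]
  constructor <;> rintro _ ⟨w, hw, rfl⟩
  exacts [(mem_linearColon.mp hw).1, (mem_linearColon.mp hw).2]

lemma linearColon_le_homogeneousSubmodule {j : ℕ} (hV : V ≤ homogeneousSubmodule (Fin 2) R j) :
    linearColon V ≤ homogeneousSubmodule (Fin 2) R (j - 1) :=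
  fun _ hw => isHomogeneous_of_X_mul (hV (mem_linearColon.mp hw).1)

lemma X_smul_inf_X_smul [IsDomain R] : 𝕩 • V ⊓ 𝕪 • V = (𝕩 * 𝕪) • linearColon V := by
  apply le_antisymm
  · rintro p ⟨⟨a, ha, rfl⟩, ⟨b, hb, hab⟩⟩
    obtain ⟨c, rfl, rfl⟩ := exists_eq_X_mul_of_X_mul_eq_X_mul zero_ne_one hab.symm
    exact ⟨c, ⟨hb, ha⟩, by simp only [DistribSMul.toLinearMap_apply, smul_eq_mul]; ring⟩
  · rintro _ ⟨w, ⟨hw₀, hw₁⟩, rfl⟩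
    refine ⟨⟨𝕪 * w, hw₁, ?_⟩, ⟨𝕩 * w, hw₀, ?_⟩⟩ <;>
      simp only [DistribSMul.toLinearMap_apply, smul_eq_mul] <;> ring

end TwoVariables

section Field

variable {k : Type*} [Field k]

local notation "𝕩" => (X 0 : MvPolynomial (Fin 2) k)
local notation "𝕪" => (X 1 : MvPolynomial (Fin 2) k)

lemma finrank_lt_finrank_homogeneousSubmodule_one_mul {W : Submodule k (MvPolynomial (Fin 2) k)}
    [FiniteDimensional k W] (hW : W ≠ ⊥) :
    Module.finrank k W < Module.finrank k ↥(homogeneousSubmodule (Fin 2) k 1 * W) := by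
  rw [← finrank_pointwise_smul (X_ne_zero 0) W, homogeneousSubmodule_one_mul_eq_sup]
  refine finrank_lt_finrank_of_lt (lt_of_le_of_ne le_sup_left fun h => hW ?_)
  exact eq_bot_of_X_smul_le zero_ne_one (h ▸ le_sup_right)

variable {V : Submodule k (MvPolynomial (Fin 2) k)} {n : ℕ}

lemma finrank_linearColon (hVd : Module.finrank k V = n + 1)
    (htau : Module.finrank k ↥(homogeneousSubmodule (Fin 2) k 1 * V) = n + 2) :
    Module.finrank k (linearColon V) = n := by
  have : FiniteDimensional k V := Module.finite_of_finrank_eq_succ hVd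
  have := Submodule.finrank_sup_add_finrank_inf_eq (𝕩 • V) (𝕪 • V)
  rw [← homogeneousSubmodule_one_mul_eq_sup, htau, X_smul_inf_X_smul,
    finrank_pointwise_smul (X_ne_zero 0), finrank_pointwise_smul (X_ne_zero 1),
    finrank_pointwise_smul (mul_ne_zero (X_ne_zero 0) (X_ne_zero 1))] at this
  omega

lemma homogeneousSubmodule_one_mul_linearColon (hn : 1 ≤ n) (hVd : Module.finrank k V = n + 1)
    (htau : Module.finrank k ↥(homogeneousSubmodule (Fin 2) k 1 * V) = n + 2) :
    homogeneousSubmodule (Fin 2) k 1 * linearColon V = V := by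
  have : FiniteDimensional k V := Module.finite_of_finrank_eq_succ hVd
  have hW := finrank_linearColon hVd htau
  have : FiniteDimensional k (linearColon V) := Module.finite_of_finrank_pos (by omega)
  have hW0 : linearColon V ≠ ⊥ := fun h => by rw [h, finrank_bot] at hW; omega
  refine eq_of_le_of_finrank_le homogeneousSubmodule_one_mul_linearColon_le ?_
  have := finrank_lt_finrank_homogeneousSubmodule_one_mul hW0
  omega

theorem exists_eq_span_singleton_mul_homogeneousSubmodule {j d : ℕ} (hd : 1 ≤ d)
    (hV : V ≤ homogeneousSubmodule (Fin 2) k j) (hVd : Module.finrank k V = d)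
    (htau : Module.finrank k ↥(homogeneousSubmodule (Fin 2) k 1 * V) = d + 1) :
    ∃ f ∈ homogeneousSubmodule (Fin 2) k (j + 1 - d),
      V = span k {f} * homogeneousSubmodule (Fin 2) k (d - 1) := by
  induction d, hd using Nat.le_induction generalizing j V with
  | base =>
    have hV0 : V ≠ ⊥ := by
      rintro rfl
      simp at hVd
    obtain ⟨f, hf, hf0⟩ := exists_mem_ne_zero_of_ne_bot hV0
    refine ⟨f, by simpa using hV hf, ?_⟩
    simpa using eq_span_singleton_of_mem_of_finrank_eq_one hVd hf hf0
  | succ n hn ih =>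
    have hWV := homogeneousSubmodule_one_mul_linearColon hn hVd htau
    obtain ⟨f, hf, hW⟩ := ih (linearColon_le_homogeneousSubmodule hV)
      (finrank_linearColon hVd htau) (by rw [hWV, hVd])
    refine ⟨f, by convert hf using 2; omega, ?_⟩
    rw [← hWV, hW, mul_left_comm, homogeneousSubmodule_one_mul, Nat.sub_add_cancel hn,
      Nat.add_sub_cancel]

end Field

theorem tau_eq_one_principal (k : Type*) [Field k] (j d : ℕ) (hd : 1 ≤ d)
    (V : Submodule k (MvPolynomial (Fin 2) k))
    (hV : V ≤ homogeneousSubmodule (Fin 2) k j)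
    (hVd : Module.finrank k V = d)
    (htau : Module.finrank k
      (Submodule.span k {p : MvPolynomial (Fin 2) k |
        ∃ ℓ ∈ homogeneousSubmodule (Fin 2) k 1, ∃ g ∈ V, p = ℓ * g}) = d + 1) :
    ∃ f ∈ homogeneousSubmodule (Fin 2) k (j + 1 - d),
      (V : Set (MvPolynomial (Fin 2) k)) =
        {p | ∃ g ∈ homogeneousSubmodule (Fin 2) k (d - 1), p = f * g} := by
  rw [span_setOf_exists_mul_eq_mul] at htau
  obtain ⟨f, hf, rfl⟩ := exists_eq_span_singleton_mul_homogeneousSubmodule hd hV hVd htau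
  refine ⟨f, hf, Set.ext fun p => ?_⟩
  simp only [SetLike.mem_coe, mem_span_singleton_mul, Set.mem_ofPred_eq, eq_comm]
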